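/- arXiv:1910.02100 — 3 statements merged into one kernel-verified Lean document; each statement's English description precedes it below -/
import Mathlib

section
/- Let n ≥ 2 be an integer, p ∈ (0,1] and γ > 0 be reals, and set Λ = (3+2γ)/p. Let W_1, …, W_{n−1} be independent random variables on a probability space, where for each i ∈ {1,…,n−1} the variable W_i takes values in {1,2,3,…} with ℙ(W_i = r) = ((i·p + n(1−p))/n)^{r−1} · (p(n−i)/n) for every integer r ≥ 1 (i.e., W_i is geometric with success probability p(n−i)/n, counting the number of trials up to and including the first success). Then ℙ(W_1 + ⋯ + W_{n−1} ≥ Λ·n·log n) ≤ e · n^{−(γ+1)}. -/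
set_option maxHeartbeats 1000000

open MeasureTheory ProbabilityTheory Real
open scoped ENNReal

lemma geom_zero {Ω : Type*} [MeasurableSpace Ω] (μ : Measure Ω) [IsProbabilityMeasure μ]
    (V : Ω → ℕ) (hV : Measurable V) (a b : ℝ) (ha : 0 ≤ a) (hb : 0 < b) (hab : a + b = 1)
    (hd : ∀ r : ℕ, 1 ≤ r → μ {ω | V ω = r} = ENNReal.ofReal (a ^ (r - 1) * b)) :
    μ {ω | V ω = 0} = 0 := by
  have ha1 : a < 1 := by linarith
  have hsum : (∑' r : ℕ, μ {ω | V ω = r}) = 1 := by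
    have hdisj : Pairwise (Function.onFun Disjoint fun r : ℕ => {ω | V ω = r}) := by
      intro r s hrs
      simp only [Function.onFun, Set.disjoint_left]
      rintro ω (h1 : V ω = r) (h2 : V ω = s)
      exact hrs (h1.symm.trans h2)
    have hmeas' : ∀ r : ℕ, MeasurableSet {ω | V ω = r} := fun r =>
      hV (measurableSet_singleton r)
    rw [← measure_iUnion hdisj hmeas']
    have : (⋃ r : ℕ, {ω | V ω = r}) = Set.univ := by
      ext ω; simp
    rw [this, measure_univ]
  have htail : (∑' r : ℕ, μ {ω | V ω = r + 1}) = 1 := by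
    have h1 : ∀ r : ℕ, μ {ω | V ω = r + 1} = ENNReal.ofReal a ^ r * ENNReal.ofReal b := by
      intro r
      rw [hd (r + 1) (Nat.le_add_left 1 r), Nat.add_sub_cancel,
        ENNReal.ofReal_mul (pow_nonneg ha r), ENNReal.ofReal_pow ha]
    simp_rw [h1]
    rw [ENNReal.tsum_mul_right, ENNReal.tsum_geometric]
    have h2 : (1 : ℝ≥0∞) - ENNReal.ofReal a = ENNReal.ofReal b := by
      rw [← ENNReal.ofReal_one, ← ENNReal.ofReal_sub _ ha]
      congr 1; linarith
    rw [h2, ENNReal.inv_mul_cancel (by simp [hb]) ENNReal.ofReal_ne_top]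
  rw [tsum_eq_zero_add' ENNReal.summable, htail] at hsum
  have h1 : (1:ℝ≥0∞) + μ {ω | V ω = 0} = 1 + 0 := by
    rw [add_zero, add_comm, hsum]
  exact (ENNReal.add_right_inj (by simp)).1 h1

lemma geom_lintegral {Ω : Type*} [MeasurableSpace Ω] (μ : Measure Ω) [IsProbabilityMeasure μ]
    (V : Ω → ℕ) (hV : Measurable V) (a b t : ℝ) (ha : 0 ≤ a) (hb : 0 < b) (hab : a + b = 1)
    (ht : 0 ≤ t) (hat : a * exp t < 1)
    (hd : ∀ r : ℕ, 1 ≤ r → μ {ω | V ω = r} = ENNReal.ofReal (a ^ (r - 1) * b)) :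
    ∫⁻ ω, ENNReal.ofReal (exp (t * (V ω : ℝ))) ∂μ
      = ENNReal.ofReal (b * exp t / (1 - a * exp t)) := by
  have h0 := geom_zero μ V hV a b ha hb hab hd
  have hae : 0 ≤ a * exp t := mul_nonneg ha (exp_pos t).le
  have hden : 0 < 1 - a * exp t := by linarith
  have hmap : ∀ r : ℕ, (μ.map V) {r} = μ {ω | V ω = r} := by
    intro r
    rw [Measure.map_apply hV (measurableSet_singleton r)]
    rfl
  calc ∫⁻ ω, ENNReal.ofReal (exp (t * (V ω : ℝ))) ∂μ
      = ∫⁻ r : ℕ, ENNReal.ofReal (exp (t * (r : ℝ))) ∂(μ.map V) := by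
        rw [lintegral_map measurable_from_nat hV]
    _ = ∑' r : ℕ, ENNReal.ofReal (exp (t * (r : ℝ))) * (μ.map V) {r} := by
        rw [lintegral_countable']
    _ = ENNReal.ofReal (b * exp t / (1 - a * exp t)) := by
        simp_rw [hmap]
        rw [tsum_eq_zero_add' ENNReal.summable, h0, mul_zero, zero_add]
        have hterm : ∀ r : ℕ,
            ENNReal.ofReal (exp (t * ((r + 1 : ℕ) : ℝ))) * μ {ω | V ω = r + 1}
              = ENNReal.ofReal (a * exp t) ^ r * ENNReal.ofReal (b * exp t) := by
          intro r
          rw [hd (r + 1) (Nat.le_add_left 1 r), Nat.add_sub_cancel,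
            ← ENNReal.ofReal_mul (exp_pos _).le, ← ENNReal.ofReal_pow hae,
            ← ENNReal.ofReal_mul (pow_nonneg hae r)]
          congr 1
          push_cast
          rw [mul_pow, mul_comm t (r + 1 : ℝ)]
          rw [show ((r : ℝ) + 1) * t = t + (r : ℝ) * t by ring, exp_add,
            ← Real.exp_nat_mul]
          ring
        simp_rw [hterm]
        rw [ENNReal.tsum_mul_right, ENNReal.tsum_geometric]
        have h2 : (1 : ℝ≥0∞) - ENNReal.ofReal (a * exp t) = ENNReal.ofReal (1 - a * exp t) := by
          rw [← ENNReal.ofReal_one, ← ENNReal.ofReal_sub _ hae]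
        rw [h2, ← ENNReal.ofReal_inv_of_pos hden, ← ENNReal.ofReal_mul (by positivity)]
        congr 1
        field_simp

lemma geom_integrable {Ω : Type*} [MeasurableSpace Ω] (μ : Measure Ω) [IsProbabilityMeasure μ]
    (V : Ω → ℕ) (hV : Measurable V) (a b t : ℝ) (ha : 0 ≤ a) (hb : 0 < b) (hab : a + b = 1)
    (ht : 0 ≤ t) (hat : a * exp t < 1)
    (hd : ∀ r : ℕ, 1 ≤ r → μ {ω | V ω = r} = ENNReal.ofReal (a ^ (r - 1) * b)) :
    Integrable (fun ω => exp (t * (V ω : ℝ))) μ := by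
  have hm : Measurable (fun ω => exp (t * (V ω : ℝ))) :=
    (Real.measurable_exp).comp (measurable_const.mul (measurable_from_nat.comp hV))
  refine ⟨hm.aestronglyMeasurable, ?_⟩
  rw [hasFiniteIntegral_iff_ofReal (Filter.Eventually.of_forall fun ω => (exp_pos _).le)]
  rw [geom_lintegral μ V hV a b t ha hb hab ht hat hd]
  exact ENNReal.ofReal_lt_top

lemma geom_mgf {Ω : Type*} [MeasurableSpace Ω] (μ : Measure Ω) [IsProbabilityMeasure μ]
    (V : Ω → ℕ) (hV : Measurable V) (a b t : ℝ) (ha : 0 ≤ a) (hb : 0 < b) (hab : a + b = 1)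
    (ht : 0 ≤ t) (hat : a * exp t < 1)
    (hd : ∀ r : ℕ, 1 ≤ r → μ {ω | V ω = r} = ENNReal.ofReal (a ^ (r - 1) * b)) :
    mgf (fun ω => (V ω : ℝ)) μ t = b * exp t / (1 - a * exp t) := by
  have hm : Measurable (fun ω => exp (t * (V ω : ℝ))) :=
    (Real.measurable_exp).comp (measurable_const.mul (measurable_from_nat.comp hV))
  rw [mgf, integral_eq_lintegral_of_nonneg_ae
    (Filter.Eventually.of_forall fun ω => (exp_pos _).le) hm.aestronglyMeasurable,
    geom_lintegral μ V hV a b t ha hb hab ht hat hd,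
    ENNReal.toReal_ofReal]
  have hden : 0 < 1 - a * exp t := by linarith
  positivity

/-- The factor `2(j+1)/(2(j+1)-1)`. -/
noncomputable def Gfun (j : ℕ) : ℝ := 2 * ((j : ℝ) + 1) / (2 * ((j : ℝ) + 1) - 1)

lemma Gfun_nonneg (j : ℕ) : 0 ≤ Gfun j := by
  unfold Gfun
  have : (0:ℝ) ≤ (j:ℝ) := Nat.cast_nonneg j
  apply div_nonneg <;> linarith

lemma prod_sq_bound (m : ℕ) :
    (∏ k ∈ Finset.range m, Gfun k) ^ 2 ≤ 4 * m + 1 := by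
  induction m with
  | zero => simp
  | succ m ih =>
    rw [Finset.prod_range_succ, mul_pow]
    have hd : (0:ℝ) < 2 * ((m : ℝ) + 1) - 1 := by
      have : (0:ℝ) ≤ (m:ℝ) := Nat.cast_nonneg m
      linarith
    have hg : Gfun m ^ 2 = (2 * ((m : ℝ) + 1)) ^ 2 / (2 * ((m : ℝ) + 1) - 1) ^ 2 := by
      unfold Gfun; rw [div_pow]
    have h1 : (∏ k ∈ Finset.range m, Gfun k) ^ 2 * Gfun m ^ 2
        ≤ (4 * m + 1) * Gfun m ^ 2 :=
      mul_le_mul_of_nonneg_right ih (by positivity)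
    refine h1.trans ?_
    rw [hg, ← mul_div_assoc, div_le_iff₀ (pow_pos hd 2)]
    push_cast
    nlinarith [sq_nonneg ((m:ℝ))]

lemma prod_le_two_sqrt (n : ℕ) (hn : 2 ≤ n)
    (f : Fin (n - 1) → ℝ)
    (hf : ∀ i : Fin (n - 1),
      f i = 2 * ((n : ℝ) - ((i.1 : ℝ) + 1)) / (2 * ((n : ℝ) - ((i.1 : ℝ) + 1)) - 1)) :
    (∏ i, f i) ≤ 2 * Real.sqrt n := by
  have hnR : (2:ℝ) ≤ (n:ℝ) := by exact_mod_cast hn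
  have key : (∏ i, f i) = ∏ k ∈ Finset.range (n - 1), Gfun k := by
    have h1 : (∏ i, f i) = ∏ i : Fin (n - 1), Gfun (n - 1 - 1 - i.1) := by
      refine Finset.prod_congr rfl (fun i _ => ?_)
      rw [hf i]
      unfold Gfun
      have hi : i.1 < n - 1 := i.isLt
      have hcast : ((n - 1 - 1 - i.1 : ℕ) : ℝ) + 1 = (n : ℝ) - ((i.1 : ℝ) + 1) := by
        have h2 : n - 1 - 1 - i.1 + 1 = n - 1 - i.1 := by omega
        rw [← Nat.cast_one (R := ℝ), ← Nat.cast_add, h2,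
          Nat.cast_sub (by omega), Nat.cast_sub (by omega)]
        push_cast; ring
      rw [hcast]
    have h2 := Fin.prod_univ_eq_prod_range (fun k => Gfun (n - 1 - 1 - k)) (n - 1)
    have h3 := Finset.prod_range_reflect Gfun (n - 1)
    rw [h1]
    exact h2.trans h3
  rw [key]
  have hPn : 0 ≤ ∏ k ∈ Finset.range (n - 1), Gfun k :=
    Finset.prod_nonneg fun k _ => Gfun_nonneg k
  have h1 := prod_sq_bound (n - 1)
  have h2 : 4 * ((n - 1 : ℕ) : ℝ) + 1 ≤ 4 * n := by
    have : ((n - 1 : ℕ) : ℝ) ≤ (n : ℝ) - 1 := by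
      rw [Nat.cast_sub (by omega)]; simp
    linarith
  have h3 : (∏ k ∈ Finset.range (n - 1), Gfun k) ≤ Real.sqrt (4 * n) :=
    Real.le_sqrt_of_sq_le (h1.trans h2)
  have h4 : Real.sqrt (4 * n) = 2 * Real.sqrt n := by
    rw [show (4 : ℝ) * n = 2 ^ 2 * n by ring, Real.sqrt_mul (by positivity),
      Real.sqrt_sq (by norm_num)]
  linarith

/-- Step 3 of the noisy rumor-spreading theorem: if `W i` (for `i = 1, …, n-1`) are
independent geometric random variables on `{1,2,…}` with success probability
`p(n-i)/n`, then `ℙ(W_1 + ⋯ + W_{n-1} ≥ Λ n log n) ≤ e · n^{-(γ+1)}`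
where `Λ = (3+2γ)/p`. -/
theorem step3_rumor_spreading
    {Ω : Type*} [MeasurableSpace Ω] (μ : Measure Ω) [IsProbabilityMeasure μ]
    (n : ℕ) (hn : 2 ≤ n) (p γ : ℝ) (hp : 0 < p) (hp1 : p ≤ 1) (hγ : 0 < γ)
    (W : Fin (n - 1) → Ω → ℕ)
    (hmeas : ∀ i, Measurable (W i))
    (hind : iIndepFun W μ)
    (hdist : ∀ (i : Fin (n - 1)) (r : ℕ), 1 ≤ r →
      μ {ω | W i ω = r} =
        ENNReal.ofReal
          ((((i.1 + 1 : ℕ) * p + n * (1 - p)) / n) ^ (r - 1) *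
            (p * (n - (i.1 + 1 : ℕ)) / n))) :
    μ {ω | ((3 + 2 * γ) / p) * n * Real.log n ≤ ∑ i, (W i ω : ℝ)} ≤
      ENNReal.ofReal (Real.exp 1 * (n : ℝ) ^ (-(γ + 1))) := by
  have hnR : (2 : ℝ) ≤ (n : ℝ) := by exact_mod_cast hn
  have hn0 : (0 : ℝ) < n := by linarith
  have h2np : (0 : ℝ) < 2 * n - p := by linarith
  set c : ℝ := 2 * n / (2 * n - p) with hc_def
  have hc0 : 0 < c := by positivity
  have hc1 : 1 ≤ c := by
    rw [le_div_iff₀ h2np]; linarith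
  set t : ℝ := Real.log c with ht_def
  have ht : 0 ≤ t := Real.log_nonneg hc1
  have hexp : Real.exp t = c := Real.exp_log hc0
  set ε : ℝ := ((3 + 2 * γ) / p) * n * Real.log n with hε_def
  have hlogn : 0 ≤ Real.log n := Real.log_nonneg (by linarith)
  have hεnn : 0 ≤ ε := by positivity
  set X : Fin (n - 1) → Ω → ℝ := fun i ω => (W i ω : ℝ) with hX_def
  have hXmeas : ∀ i, Measurable (X i) := fun i => measurable_from_nat.comp (hmeas i)
  have hindX : iIndepFun X μ :=
    hind.comp (fun _ => (Nat.cast : ℕ → ℝ)) (fun _ => measurable_from_nat)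
  -- per-index facts
  have hK : ∀ i : Fin (n - 1), ((i.1 + 1 : ℕ) : ℝ) ≤ (n : ℝ) - 1 := by
    intro i
    have h1 : (i.1 + 1 : ℕ) ≤ n - 1 := i.isLt
    have h2 : ((i.1 + 1 : ℕ) : ℝ) ≤ ((n - 1 : ℕ) : ℝ) := by exact_mod_cast h1
    rwa [Nat.cast_sub (by omega), Nat.cast_one] at h2
  have hK1 : ∀ i : Fin (n - 1), (1 : ℝ) ≤ ((i.1 + 1 : ℕ) : ℝ) := by
    intro i; exact_mod_cast Nat.one_le_iff_ne_zero.2 (Nat.succ_ne_zero _)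
  have ha : ∀ i : Fin (n - 1),
      0 ≤ (((i.1 + 1 : ℕ) : ℝ) * p + n * (1 - p)) / n := by
    intro i
    have h1p : 0 ≤ 1 - p := by linarith
    have h2 := hK1 i
    apply div_nonneg _ hn0.le
    nlinarith
  have hb : ∀ i : Fin (n - 1), 0 < p * ((n : ℝ) - ((i.1 + 1 : ℕ) : ℝ)) / n := by
    intro i
    have := hK i
    apply div_pos _ hn0
    apply mul_pos hp
    linarith
  have hab : ∀ i : Fin (n - 1),
      (((i.1 + 1 : ℕ) : ℝ) * p + n * (1 - p)) / n
        + p * ((n : ℝ) - ((i.1 + 1 : ℕ) : ℝ)) / n = 1 := by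
    intro i
    field_simp
    ring
  have hat : ∀ i : Fin (n - 1),
      (((i.1 + 1 : ℕ) : ℝ) * p + n * (1 - p)) / n * Real.exp t < 1 := by
    intro i
    rw [hexp]
    have hKi := hK i
    have h1 : (((i.1 + 1 : ℕ) : ℝ) * p + n * (1 - p)) / n * c
        = 2 * (((i.1 + 1 : ℕ) : ℝ) * p + n * (1 - p)) / (2 * n - p) := by
      rw [hc_def]; field_simp
    rw [h1, div_lt_one h2np]
    nlinarith
  have hint : ∀ i : Fin (n - 1), Integrable (fun ω => Real.exp (t * X i ω)) μ := by
    intro i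
    exact geom_integrable μ (W i) (hmeas i) _ _ t (ha i) (hb i) (hab i) ht (hat i)
      (fun r hr => hdist i r hr)
  have hintS : Integrable (fun ω => Real.exp (t * (∑ i, X i) ω)) μ :=
    hindX.integrable_exp_mul_sum hXmeas (fun i _ => hint i)
  -- Markov / Chernoff
  have hmarkov := measure_ge_le_exp_mul_mgf (X := ∑ i, X i) (μ := μ) (t := t) ε ht hintS
  have hset : {ω | ε ≤ ∑ i, (W i ω : ℝ)} = {ω | ε ≤ (∑ i, X i) ω} := by
    ext ω; simp [hX_def, Finset.sum_apply]
  -- mgf values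
  have hmgf : ∀ i : Fin (n - 1),
      mgf (X i) μ t = 2 * ((n : ℝ) - ((i.1 : ℝ) + 1)) / (2 * ((n : ℝ) - ((i.1 : ℝ) + 1)) - 1) := by
    intro i
    have h0 := geom_mgf μ (W i) (hmeas i) _ _ t (ha i) (hb i) (hab i) ht (hat i)
      (fun r hr => hdist i r hr)
    rw [hX_def] at *
    rw [h0, hexp]
    have hKi := hK i
    have hKc : ((i.1 + 1 : ℕ) : ℝ) = (i.1 : ℝ) + 1 := by push_cast; ring
    set K : ℝ := (i.1 : ℝ) + 1 with hKdef
    rw [hKc]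
    have hJ1 : (1:ℝ) ≤ (n : ℝ) - K := by rw [hKdef]; rw [hKc] at hKi; linarith
    have hden1 : (K * p + ↑n * (1 - p)) / ↑n * c = 2 * (K * p + n * (1 - p)) / (2 * n - p) := by
      rw [hc_def]; field_simp
    have hnum : p * (↑n - K) / ↑n * c = 2 * p * (n - K) / (2 * n - p) := by
      rw [hc_def]; field_simp
    rw [hden1, hnum]
    have hd2 : (0:ℝ) < 2 * ((n:ℝ) - K) - 1 := by linarith
    have hden2 : 1 - 2 * (K * p + ↑n * (1 - p)) / (2 * ↑n - p)
        = p * (2 * ((n:ℝ) - K) - 1) / (2 * n - p) := by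
      field_simp; ring
    rw [hden2, div_div_div_cancel_right₀]
    · rw [div_eq_div_iff (by positivity) (by positivity)]
      ring
    · exact h2np.ne'
  -- the product bound
  have hP_le : (∏ i, mgf (X i) μ t) ≤ 2 * Real.sqrt n :=
    prod_le_two_sqrt n hn _ hmgf
  have hP_nonneg : 0 ≤ ∏ i, mgf (X i) μ t :=
    Finset.prod_nonneg fun i _ => mgf_nonneg
  -- numeric bound on exp (-t * ε)
  have htlow : p / (2 * n) ≤ t := by
    have hy : (0:ℝ) < (2 * n - p) / (2 * n) := by positivity
    have h1 := Real.log_le_sub_one_of_pos hy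
    have h2 : Real.log ((2 * n - p) / (2 * n)) = -t := by
      rw [ht_def, hc_def, ← Real.log_inv]
      congr 1
      field_simp
    rw [h2] at h1
    have h3 : (2 * n - p) / (2 * n) - 1 = -(p / (2 * n)) := by field_simp; ring
    rw [h3] at h1
    linarith
  have htε : (γ + 3/2) * Real.log n ≤ t * ε := by
    have h1 : (p / (2 * n)) * ε = (γ + 3/2) * Real.log n := by
      rw [hε_def]
      field_simp
      ring
    rw [← h1]
    exact mul_le_mul_of_nonneg_right htlow hεnn
  have hexp_le : Real.exp (-t * ε) ≤ (n : ℝ) ^ (-(γ + 3/2)) := by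
    rw [Real.rpow_def_of_pos hn0]
    apply Real.exp_le_exp.2
    rw [neg_mul, show Real.log n * -(γ + 3/2) = -((γ + 3/2) * Real.log n) by ring]
    exact neg_le_neg htε
  have hrpow_nonneg : (0:ℝ) ≤ (n : ℝ) ^ (-(γ + 3/2)) := Real.rpow_nonneg hn0.le _
  have hfinal : Real.exp (-t * ε) * ∏ i, mgf (X i) μ t
      ≤ Real.exp 1 * (n : ℝ) ^ (-(γ + 1)) := by
    have h1 : Real.exp (-t * ε) * ∏ i, mgf (X i) μ t
        ≤ (n : ℝ) ^ (-(γ + 3/2)) * (2 * Real.sqrt n) :=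
      mul_le_mul hexp_le hP_le hP_nonneg hrpow_nonneg
    refine h1.trans ?_
    rw [Real.sqrt_eq_rpow (n:ℝ)]
    have h3 : (n : ℝ) ^ (-(γ + 3/2)) * (2 * (n : ℝ) ^ ((1:ℝ)/2))
        = 2 * (n : ℝ) ^ (-(γ + 1)) := by
      rw [show (n : ℝ) ^ (-(γ + 3/2)) * (2 * (n : ℝ) ^ ((1:ℝ)/2))
        = 2 * ((n : ℝ) ^ (-(γ + 3/2)) * (n : ℝ) ^ ((1:ℝ)/2)) by ring,
        ← Real.rpow_add hn0]
      congr 2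
      ring
    rw [show (1:ℝ) / (2:ℝ) = ((1:ℝ)/2) by norm_num] at *
    rw [h3]
    have h4 : (2:ℝ) ≤ Real.exp 1 := by
      have := Real.add_one_le_exp 1
      linarith
    exact mul_le_mul_of_nonneg_right h4 (Real.rpow_nonneg hn0.le _)
  -- conclude
  rw [hset]
  calc μ {ω | ε ≤ (∑ i, X i) ω}
      = ENNReal.ofReal ((μ {ω | ε ≤ (∑ i, X i) ω}).toReal) :=
        (ENNReal.ofReal_toReal (measure_ne_top _ _)).symm
    _ ≤ ENNReal.ofReal (Real.exp 1 * (n : ℝ) ^ (-(γ + 1))) := by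
        apply ENNReal.ofReal_le_ofReal
        refine hmarkov.trans ?_
        rw [hindX.mgf_sum hXmeas Finset.univ]
        exact hfinal
end

section
/- Let n ≥ 2 be an integer and set M = ⌈361·log n⌉ + 1. If X is a binomial random variable with (n−1)·M trials and success probability 1/(n−1), then ℙ(X > 2M − 2) ≤ n^{−6}. -/
open MeasureTheory Real

/-- With `M = ⌈361 log n⌉ + 1`, a binomial random variable with `(n-1)·M` trials and
success probability `1/(n-1)` exceeds `2M - 2` with probability at most `n^{-6}`. -/
theorem early_phase_recommendations_bound
    {Ω : Type*} [MeasurableSpace Ω] (μ : Measure Ω) [IsProbabilityMeasure μ]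
    (n : ℕ) (hn : 2 ≤ n)
    (M : ℕ) (hM : M = ⌈361 * Real.log n⌉₊ + 1)
    (X : Ω → ℕ) (hmeas : Measurable X)
    (hdist : ∀ k : ℕ, μ {ω | X ω = k} =
      ENNReal.ofReal ((((n - 1) * M).choose k : ℝ) * (1 / (n - 1 : ℝ)) ^ k *
        (1 - 1 / (n - 1 : ℝ)) ^ ((n - 1) * M - k))) :
    μ {ω | 2 * M - 2 < X ω} ≤ ENNReal.ofReal ((n : ℝ) ^ (-(6 : ℝ))) := by
  classical
  have hM1 : 1 ≤ M := by omega
  set N := (n-1)*M with hN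
  set p : ℝ := 1 / ((n:ℝ) - 1) with hp
  set pmf : ℕ → ℝ := fun k => (N.choose k : ℝ) * p ^ k * (1 - p) ^ (N - k) with hpmf
  have hn1 : (1:ℝ) ≤ (n:ℝ) - 1 := by
    have : (2:ℝ) ≤ n := by exact_mod_cast hn
    linarith
  have hp0 : 0 < p := by rw [hp]; positivity
  have hp1 : p ≤ 1 := by rw [hp, div_le_one (by linarith)]; linarith
  have h1p : (0:ℝ) ≤ 1 - p := by linarith
  have hpmf0 : ∀ k, 0 ≤ pmf k := by intro k; rw [hpmf]; positivity
  set c1 := 2*M-1 with hc1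
  -- Step 1: express the tail probability as a finite sum of pmf values
  have hset : {ω | 2*M - 2 < X ω} = ⋃ j : ℕ, {ω | X ω = c1 + j} := by
    ext ω
    simp only [Set.mem_setOf_eq, Set.mem_iUnion]
    constructor
    · intro h; exact ⟨X ω - c1, by omega⟩
    · rintro ⟨j, hj⟩; omega
  have hmeasj : ∀ j, MeasurableSet {ω | X ω = c1 + j} := by
    intro j
    exact hmeas (measurableSet_singleton _)
  have hdisj : Pairwise (Function.onFun Disjoint fun j => {ω | X ω = c1 + j}) := by
    intro i j hij
    simp only [Function.onFun, Set.disjoint_left, Set.mem_setOf_eq]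
    intro ω h1 h2
    omega
  rw [hset, measure_iUnion hdisj hmeasj]
  have hdist' : ∀ j : ℕ, μ {ω | X ω = c1 + j} = ENNReal.ofReal (pmf (c1 + j)) := by
    intro j; exact hdist (c1 + j)
  simp_rw [hdist']
  have hzero : ∀ j ∉ Finset.range N, ENNReal.ofReal (pmf (c1+j)) = 0 := by
    intro j hj
    simp only [Finset.mem_range, not_lt] at hj
    have : N < c1 + j := by omega
    rw [hpmf]
    simp [Nat.choose_eq_zero_of_lt this]
  rw [tsum_eq_sum hzero, ← ENNReal.ofReal_sum_of_nonneg (fun j _ => hpmf0 (c1+j))]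
  apply ENNReal.ofReal_le_ofReal
  -- Step 2: Chernoff-style bound with parameter e^t = 2
  set g : ℕ → ℝ := fun k => 2 ^ k * pmf k with hg
  have hg0 : ∀ k, 0 ≤ g k := by intro k; exact mul_nonneg (by positivity) (hpmf0 k)
  have step1 : ∑ j ∈ Finset.range N, pmf (c1+j)
      ≤ ((2:ℝ)^c1)⁻¹ * ∑ j ∈ Finset.range N, g (c1+j) := by
    rw [Finset.mul_sum]
    apply Finset.sum_le_sum
    intro j _
    rw [hg]
    have h1 : (1:ℝ) ≤ 2 ^ j := one_le_pow₀ (by norm_num)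
    have : pmf (c1+j) * 1 ≤ pmf (c1+j) * 2 ^ j :=
      mul_le_mul_of_nonneg_left h1 (hpmf0 _)
    have h2 : ((2:ℝ)^c1)⁻¹ * (2 ^ (c1+j) * pmf (c1+j)) = pmf (c1+j) * 2 ^ j := by
      rw [pow_add]; field_simp
    rw [h2]; linarith
  have step2 : ∑ j ∈ Finset.range N, g (c1+j) ≤ ∑ k ∈ Finset.range (N+1), g k := by
    have himg : ∑ j ∈ Finset.range N, g (c1+j)
        = ∑ k ∈ (Finset.range N).image (fun j => c1 + j), g k := by
      rw [Finset.sum_image]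
      intro a _ b _ h; simp only at h; omega
    rw [himg]
    have hsub : (Finset.range N).image (fun j => c1 + j) ⊆ Finset.range (c1 + N) := by
      intro k hk
      simp only [Finset.mem_image, Finset.mem_range] at hk ⊢
      obtain ⟨j, hj, rfl⟩ := hk; omega
    calc ∑ k ∈ (Finset.range N).image (fun j => c1 + j), g k
        ≤ ∑ k ∈ Finset.range (c1 + N), g k :=
          Finset.sum_le_sum_of_subset_of_nonneg hsub (fun k _ _ => hg0 k)
      _ = ∑ k ∈ Finset.range (N+1), g k := by
          symm
          apply Finset.sum_subset
          · intro k hk; simp only [Finset.mem_range] at *; omega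
          · intro k hk hk2
            simp only [Finset.mem_range] at hk hk2
            have : N < k := by omega
            rw [hg, hpmf]
            simp [Nat.choose_eq_zero_of_lt this]
  have step3 : ∑ k ∈ Finset.range (N+1), g k = (1 + p) ^ N := by
    have : (1:ℝ) + p = 2*p + (1-p) := by ring
    rw [this, add_pow]
    apply Finset.sum_congr rfl
    intro k _
    rw [hg, hpmf, mul_pow]
    ring
  -- Step 3: (1+p)^N ≤ exp M
  have hNp : (N:ℝ) * p = M := by
    rw [hN, hp]
    push_cast [Nat.cast_sub (by omega : 1 ≤ n)]
    field_simp
  have step4 : (1 + p) ^ N ≤ Real.exp M := by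
    calc (1 + p) ^ N ≤ (Real.exp p) ^ N :=
          pow_le_pow_left₀ (by linarith) (by linarith [Real.add_one_le_exp p]) N
      _ = Real.exp ((N:ℝ) * p) := by rw [← Real.exp_nat_mul]
      _ = Real.exp M := by rw [hNp]
  -- Step 4: final numeric estimate
  have final : Real.exp M * ((2:ℝ) ^ c1)⁻¹ ≤ (n : ℝ) ^ (-(6 : ℝ)) := by
    have hn0 : (0:ℝ) < n := by positivity
    have hL : Real.log 2 ≤ Real.log n := by
      apply Real.log_le_log (by norm_num)
      exact_mod_cast hn
    have hl2 : (0.6931471803 : ℝ) < Real.log 2 := Real.log_two_gt_d9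
    have hl2' : Real.log 2 < 0.6931471808 := Real.log_two_lt_d9
    have hm : 361 * Real.log n + 1 ≤ (M:ℝ) := by
      rw [hM]
      push_cast
      have := Nat.le_ceil (361 * Real.log n)
      linarith
    have hc : ((c1 : ℕ) : ℝ) = 2*(M:ℝ) - 1 := by
      have h' : (c1 : ℕ) + 1 = 2*M := by omega
      have := congrArg (fun k : ℕ => (k:ℝ)) h'
      push_cast at this
      linarith
    rw [Real.rpow_def_of_pos hn0]
    have h2 : (2:ℝ) ^ c1 = Real.exp ((c1 : ℕ) * Real.log 2) := by
      rw [Real.exp_nat_mul, Real.exp_log (by norm_num)]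
    rw [h2, ← Real.exp_neg, ← Real.exp_add, Real.exp_le_exp, hc]
    nlinarith [mul_le_mul_of_nonneg_left hm (by linarith : (0:ℝ) ≤ 2*Real.log 2 - 1),
      mul_le_mul_of_nonneg_left hL (by norm_num : (0:ℝ) ≤ 6)]
  calc ∑ j ∈ Finset.range N, pmf (c1+j)
      ≤ ((2:ℝ)^c1)⁻¹ * ∑ j ∈ Finset.range N, g (c1+j) := step1
    _ ≤ ((2:ℝ)^c1)⁻¹ * ∑ k ∈ Finset.range (N+1), g k := by
        apply mul_le_mul_of_nonneg_left step2 (by positivity)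
    _ = ((2:ℝ)^c1)⁻¹ * (1+p)^N := by rw [step3]
    _ ≤ ((2:ℝ)^c1)⁻¹ * Real.exp M := by
        apply mul_le_mul_of_nonneg_left step4 (by positivity)
    _ = Real.exp M * ((2:ℝ)^c1)⁻¹ := by ring
    _ ≤ (n : ℝ) ^ (-(6 : ℝ)) := final
end

section
/- Let n ≥ 2 and K ≥ 1 be integers and let 0 < ε ≤ 1 be real. Set M = ⌈361·log n⌉ + 1, δ = 1/(3M), and L = ⌈ ((2M + ⌈K/n⌉)/ε²) · 18M · log(100·(2M + ⌈K/n⌉)) ⌉. If X is a Poisson random variable with mean (M−1)·L·(1+δ), then ℙ(X ≥ M·L) ≤ n^{−4}. -/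
open MeasureTheory Real

lemma aux_fact_mul_pow_le (a : ℕ) : ∀ j : ℕ, (a.factorial : ℝ) * (a : ℝ) ^ j ≤ ((a + j).factorial : ℝ) := by
  intro j
  induction j with
  | zero => simp
  | succ j ih =>
    have h1 : (a : ℝ) ≤ ((a + j + 1 : ℕ) : ℝ) := by exact_mod_cast Nat.le_succ_of_le (Nat.le_add_right a j)
    calc (a.factorial : ℝ) * (a:ℝ) ^ (j+1) = ((a.factorial : ℝ) * (a:ℝ)^j) * a := by ring
    _ ≤ ((a + j).factorial : ℝ) * ((a + j + 1 : ℕ) : ℝ) := by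
        apply mul_le_mul ih h1 (by positivity) (by positivity)
    _ = ((a + (j+1)).factorial : ℝ) := by
        rw [show a + (j+1) = (a + j) + 1 by ring, Nat.factorial_succ]
        push_cast; ring

lemma aux_one_sub_mul_exp {x : ℝ} (hx0 : 0 ≤ x) (hx1 : x ≤ 1) :
    (1 - x) * Real.exp x ≤ Real.exp (-(x^2/4)) := by
  have h2 : (0:ℝ) < 1 - x/2 := by linarith
  have hE := Real.exp_pos (x/2)
  set E := Real.exp (x/2) with hEdef
  have h3 : (1 - x/2) * E ≤ 1 := by
    have h' : 1 - x/2 ≤ Real.exp (-(x/2)) := by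
      have := Real.add_one_le_exp (-(x/2)); linarith
    calc (1 - x/2) * E ≤ Real.exp (-(x/2)) * E := mul_le_mul_of_nonneg_right h' hE.le
    _ = 1 := by rw [hEdef, ← Real.exp_add]; norm_num
  have h4 : (1 - x) * Real.exp x ≤ 1 - x^2/4 := by
    have hexpx : Real.exp x = E^2 := by
      rw [hEdef, sq, ← Real.exp_add]; ring_nf
    have h5 : (1-x/2)^2 * E^2 ≤ 1 := by nlinarith [mul_pos h2 hE]
    have hb : (1-x) ≤ (1-x^2/4)*(1-x/2)^2 := by nlinarith [pow_nonneg hx0 3]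
    have hE2 : (0:ℝ) ≤ E^2 := sq_nonneg E
    have step1 : (1-x)*E^2 ≤ ((1-x^2/4)*(1-x/2)^2)*E^2 := mul_le_mul_of_nonneg_right hb hE2
    have step2 : (1-x^2/4)*((1-x/2)^2*E^2) ≤ (1-x^2/4)*1 :=
      mul_le_mul_of_nonneg_left h5 (by nlinarith)
    rw [hexpx]
    nlinarith [step1, step2]
  have h6 : 1 - x^2/4 ≤ Real.exp (-(x^2/4)) := by
    have := Real.add_one_le_exp (-(x^2/4)); linarith
  linarith

set_option maxHeartbeats 2000000 in
/-- With `M = ⌈361 log n⌉ + 1`, `δ = 1/(3M)` and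
`L = ⌈((2M + ⌈K/n⌉)/ε²)·18M·log(100(2M + ⌈K/n⌉))⌉`, a Poisson random variable with
mean `(M-1)·L·(1+δ)` is at least `M·L` with probability at most `n^{-4}`. -/
theorem early_phase_clock_bound
    {Ω : Type*} [MeasurableSpace Ω] (μ : Measure Ω) [IsProbabilityMeasure μ]
    (n K : ℕ) (hn : 2 ≤ n) (hK : 1 ≤ K)
    (ε : ℝ) (hε0 : 0 < ε) (hε1 : ε ≤ 1)
    (M L : ℕ) (δ : ℝ)
    (hM : M = ⌈361 * Real.log n⌉₊ + 1)
    (hδ : δ = 1 / (3 * (M : ℝ)))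
    (hL : L = ⌈(((2 * M + ⌈(K : ℝ) / n⌉₊ : ℕ) : ℝ) / ε ^ 2) * (18 * M) *
      Real.log (100 * ((2 * M + ⌈(K : ℝ) / n⌉₊ : ℕ) : ℝ))⌉₊)
    (X : Ω → ℕ) (hmeas : Measurable X)
    (hdist : ∀ k : ℕ, μ {ω | X ω = k} =
      ENNReal.ofReal (Real.exp (-(((M : ℝ) - 1) * L * (1 + δ))) *
        (((M : ℝ) - 1) * L * (1 + δ)) ^ k / (Nat.factorial k))) :
    μ {ω | M * L ≤ X ω} ≤ ENNReal.ofReal ((n : ℝ) ^ (-(4 : ℝ))) := by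
  -- basic numeric facts
  have hn1 : (1:ℝ) < (n:ℝ) := by exact_mod_cast lt_of_lt_of_le one_lt_two hn
  have hlogn : 0 < Real.log n := Real.log_pos hn1
  have hM2 : 2 ≤ M := by
    rw [hM]
    have : 0 < ⌈361 * Real.log n⌉₊ := Nat.ceil_pos.mpr (by positivity)
    omega
  have hMR : (2:ℝ) ≤ (M:ℝ) := by exact_mod_cast hM2
  have hM0 : (0:ℝ) < (M:ℝ) := by linarith
  have hlogn_le : Real.log n ≤ ((M:ℝ) - 1)/361 := by
    have h1 : (361:ℝ) * Real.log n ≤ (⌈361 * Real.log n⌉₊ : ℝ) := Nat.le_ceil _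
    have h2 : (M:ℝ) = (⌈361 * Real.log n⌉₊ : ℝ) + 1 := by exact_mod_cast congrArg (Nat.cast (R := ℝ)) hM
    linarith
  have hlogM : Real.log M ≤ (M:ℝ) - 1 := Real.log_le_sub_one_of_pos hM0
  -- lower bound on L
  set c : ℕ := ⌈(K : ℝ) / n⌉₊ with hc
  have hc1 : 1 ≤ c := Nat.ceil_pos.mpr (by positivity)
  have hB5 : 5 ≤ 2 * M + c := by omega
  have hBR : (5:ℝ) ≤ ((2 * M + c : ℕ) : ℝ) := by exact_mod_cast hB5
  have hlog500 : (5:ℝ) ≤ Real.log (100 * ((2 * M + c : ℕ) : ℝ)) := by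
    rw [Real.le_log_iff_exp_le (by positivity)]
    have hexp5 : Real.exp 5 < 500 := by
      have h := Real.exp_one_lt_d9
      calc Real.exp 5 = Real.exp 1 ^ (5:ℕ) := by
            rw [← Real.exp_nat_mul]; norm_num
      _ < 2.7182818286 ^ (5:ℕ) := by
            exact pow_lt_pow_left₀ h (Real.exp_pos 1).le (by norm_num)
      _ < 500 := by norm_num
    nlinarith
  have hLlb : ((2*(M:ℝ)+1) * (18*(M:ℝ))) * 5 ≤ (L:ℝ) := by
    have h1 : (((2 * M + c : ℕ) : ℝ) / ε ^ 2) * (18 * M) *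
        Real.log (100 * ((2 * M + c : ℕ) : ℝ)) ≤ (L:ℝ) := by
      rw [hL]; exact Nat.le_ceil _
    have hB1 : (2*(M:ℝ)+1) ≤ ((2 * M + c : ℕ) : ℝ) := by
      push_cast; have : (1:ℝ) ≤ (c:ℝ) := by exact_mod_cast hc1
      linarith
    have hε2 : ((2 * M + c : ℕ) : ℝ) ≤ ((2 * M + c : ℕ) : ℝ) / ε ^ 2 := by
      rw [le_div_iff₀ (by positivity)]
      have hε2' : ε ^ 2 ≤ 1 := by nlinarith
      calc ((2 * M + c : ℕ) : ℝ) * ε ^ 2 ≤ ((2 * M + c : ℕ) : ℝ) * 1 :=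
            mul_le_mul_of_nonneg_left hε2' (by linarith)
      _ = ((2 * M + c : ℕ) : ℝ) := mul_one _
    have : ((2*(M:ℝ)+1) * (18*(M:ℝ))) * 5 ≤
        (((2 * M + c : ℕ) : ℝ) / ε ^ 2) * (18 * M) * Real.log (100 * ((2 * M + c : ℕ) : ℝ)) := by
      have hstep : (2*(M:ℝ)+1) ≤ ((2 * M + c : ℕ) : ℝ) / ε ^ 2 := le_trans hB1 hε2
      have h18 : (0:ℝ) ≤ 18 * (M:ℝ) := by positivity
      calc ((2*(M:ℝ)+1) * (18*(M:ℝ))) * 5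
          ≤ ((((2 * M + c : ℕ) : ℝ) / ε ^ 2) * (18*(M:ℝ))) * 5 := by
            apply mul_le_mul_of_nonneg_right _ (by norm_num)
            exact mul_le_mul_of_nonneg_right hstep h18
      _ ≤ (((2 * M + c : ℕ) : ℝ) / ε ^ 2) * (18 * M) *
            Real.log (100 * ((2 * M + c : ℕ) : ℝ)) := by
            apply mul_le_mul_of_nonneg_left hlog500
            positivity
    linarith
  have hL180 : 180*(M:ℝ)^2 ≤ (L:ℝ) := by nlinarith
  have hLpos : (0:ℝ) < (L:ℝ) := by nlinarith
  have hL1 : 1 ≤ L := Nat.one_le_iff_ne_zero.mpr (by rintro rfl; norm_num at hLpos)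
  -- main quantities
  set lam := ((M : ℝ) - 1) * (L:ℝ) * (1 + δ) with hlam
  set a := M * L with ha
  set x : ℝ := (2*(M:ℝ)+1)/(3*(M:ℝ)^2) with hx
  have hx0 : 0 < x := by positivity
  have hx1 : x ≤ 1 := by
    rw [hx, div_le_one (by positivity)]; nlinarith
  have haR : ((a:ℕ):ℝ) = (M:ℝ)*(L:ℝ) := by push_cast [ha]; ring
  have haR0 : (0:ℝ) < ((a:ℕ):ℝ) := by
    rw [haR]
    have : (1:ℝ) ≤ (L:ℝ) := by exact_mod_cast hL1
    nlinarith
  have hlam_eq : lam = ((a:ℕ):ℝ) * (1 - x) := by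
    rw [hlam, haR, hδ, hx]
    field_simp
    ring
  have hlam0 : 0 ≤ lam := by
    rw [hlam_eq]
    have : 0 ≤ 1 - x := by linarith
    positivity
  have hr0 : (0:ℝ) ≤ 1 - x := by linarith
  have hr1 : 1 - x < 1 := by linarith
  -- measure as tsum
  have hset : {ω | a ≤ X ω} = ⋃ j : ℕ, {ω | X ω = a + j} := by
    ext ω
    simp only [Set.mem_setOf_eq, Set.mem_iUnion]
    constructor
    · intro h; exact ⟨X ω - a, by omega⟩
    · rintro ⟨j, hj⟩; omega
  have hmeasb : ∀ j : ℕ, MeasurableSet {ω | X ω = a + j} := by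
    intro j
    exact hmeas (measurableSet_singleton _)
  have hdisj : Pairwise (Function.onFun Disjoint fun j : ℕ => {ω | X ω = a + j}) := by
    intro i j hij
    simp only [Function.onFun, Set.disjoint_left, Set.mem_setOf_eq]
    intro ω hi hj2
    exact hij (by omega)
  rw [hset, measure_iUnion hdisj hmeasb]
  simp_rw [hdist]
  -- the real-valued tail
  set p : ℕ → ℝ := fun k => Real.exp (-lam) * lam ^ k / (Nat.factorial k) with hp
  have hp_nonneg : ∀ k, 0 ≤ p k := by
    intro k; rw [hp]; positivity
  have hgeo : ∀ j : ℕ, p (a + j) ≤ p a * (1-x) ^ j := by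
    intro j
    have hfj := aux_fact_mul_pow_le a j
    have h1 : p (a+j) ≤ Real.exp (-lam) * lam^(a+j) / ((a.factorial:ℝ) * ((a:ℕ):ℝ)^j) := by
      rw [hp]
      apply div_le_div_of_nonneg_left (by positivity) (by positivity) hfj
    refine h1.trans_eq ?_
    rw [hp]
    rw [pow_add, hlam_eq, mul_pow ((a:ℕ):ℝ) (1-x) j]
    have hfa : ((a.factorial : ℕ):ℝ) ≠ 0 := by positivity
    field_simp
  have hsum_geo : Summable (fun j : ℕ => p a * (1-x) ^ j) :=
    (summable_geometric_of_lt_one hr0 hr1).mul_left _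
  have hsum : Summable (fun j : ℕ => p (a + j)) :=
    Summable.of_nonneg_of_le (fun j => hp_nonneg _) hgeo hsum_geo
  have htsum_le : ∑' j : ℕ, p (a + j) ≤ p a * x⁻¹ := by
    have h := Summable.tsum_le_tsum hgeo hsum hsum_geo
    rwa [tsum_mul_left, tsum_geometric_of_lt_one hr0 hr1, show (1 - (1-x)) = x by ring] at h
  -- bound p a
  have hpa : p a ≤ Real.exp (-(x^2/4) * ((a:ℕ):ℝ)) := by
    have e1 : p a = Real.exp (-lam) * (((a:ℕ):ℝ)^a / (a.factorial:ℝ)) * (1-x)^a := by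
      show Real.exp (-lam) * lam ^ a / (a.factorial:ℝ) = _
      rw [hlam_eq, mul_pow]
      ring
    rw [e1]
    have e2 : ((a:ℕ):ℝ)^a / (a.factorial:ℝ) ≤ Real.exp ((a:ℕ):ℝ) :=
      Real.pow_div_factorial_le_exp _ haR0.le a
    have h1x : (0:ℝ) ≤ 1 - x := hr0
    calc Real.exp (-lam) * (((a:ℕ):ℝ)^a / (a.factorial:ℝ)) * (1-x)^a
        ≤ Real.exp (-lam) * Real.exp ((a:ℕ):ℝ) * (1-x)^a := by
          apply mul_le_mul_of_nonneg_right _ (by positivity)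
          exact mul_le_mul_of_nonneg_left e2 (Real.exp_pos _).le
    _ = ((1-x) * Real.exp x)^a := by
          rw [mul_pow, ← Real.exp_nat_mul, ← Real.exp_add, hlam_eq,
            mul_comm ((1-x)^a) (Real.exp (((a:ℕ):ℝ) * x))]
          congr 1
          ring
    _ ≤ (Real.exp (-(x^2/4)))^a := by
          apply pow_le_pow_left₀ (by positivity) (aux_one_sub_mul_exp hx0.le hx1)
    _ = Real.exp (-(x^2/4) * ((a:ℕ):ℝ)) := by
          rw [← Real.exp_nat_mul]
          congr 1
          ring
  -- x⁻¹ ≤ M²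
  have hxinv : x⁻¹ ≤ (M:ℝ)^2 := by
    rw [hx, inv_div, div_le_iff₀ (by positivity)]
    nlinarith
  -- final real inequality
  have hfinal : p a * x⁻¹ ≤ (n:ℝ) ^ (-(4:ℝ)) := by
    have hM2exp : (M:ℝ)^2 = Real.exp (2 * Real.log M) := by
      rw [show (2:ℝ) * Real.log M = Real.log M + Real.log M by ring, Real.exp_add,
        Real.exp_log hM0, sq]
    have hrpow : (n:ℝ) ^ (-(4:ℝ)) = Real.exp (Real.log n * (-4)) := by
      rw [Real.rpow_def_of_pos (by positivity)]
    have hchain : p a * x⁻¹ ≤ Real.exp (-(x^2/4) * ((a:ℕ):ℝ)) * Real.exp (2 * Real.log M) := by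
      rw [← hM2exp]
      exact mul_le_mul hpa hxinv (by positivity) (Real.exp_pos _).le
    rw [hrpow]
    refine hchain.trans ?_
    rw [← Real.exp_add]
    apply Real.exp_le_exp.mpr
    -- need: -(x²/4)*a + 2 log M ≤ -4 log n
    have hx_ge : 2/(3*(M:ℝ)) ≤ x := by
      rw [hx, div_le_div_iff₀ (by positivity) (by positivity)]
      nlinarith
    have hx2 : 4/(9*(M:ℝ)^2) ≤ x^2 := by
      have := mul_le_mul hx_ge hx_ge (by positivity) hx0.le
      calc 4/(9*(M:ℝ)^2) = (2/(3*(M:ℝ))) * (2/(3*(M:ℝ))) := by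
            field_simp; ring
      _ ≤ x * x := this
      _ = x^2 := (sq x).symm
    have ha_ge : 180*(M:ℝ)^3 ≤ ((a:ℕ):ℝ) := by
      rw [haR]
      nlinarith
    have hprod : 80*(M:ℝ) ≤ x^2 * ((a:ℕ):ℝ) := by
      calc 80*(M:ℝ) = (4/(9*(M:ℝ)^2)) * (180*(M:ℝ)^3) := by
            field_simp; ring
      _ ≤ x^2 * ((a:ℕ):ℝ) := mul_le_mul hx2 ha_ge (by positivity) (by positivity)
    nlinarith [hlogn_le, hlogM, hprod]
  -- put it together
  calc ∑' j : ℕ, ENNReal.ofReal (Real.exp (-lam) * lam ^ (a + j) / (Nat.factorial (a+j)))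
      = ENNReal.ofReal (∑' j : ℕ, p (a + j)) := by
        rw [ENNReal.ofReal_tsum_of_nonneg (fun j => hp_nonneg _) hsum]
  _ ≤ ENNReal.ofReal ((n:ℝ) ^ (-(4:ℝ))) :=
        ENNReal.ofReal_le_ofReal (htsum_le.trans hfinal)
end
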